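/- Let 1<p<∞ with p≠2. If the composition operator C_φ induced by an analytic self-map φ of the unit disk is an isometry on the analytic Besov space B_p, then φ is a full map of the disk, i.e., the set 𝔻 \ φ(𝔻) has Lebesgue area measure zero. -/

import Mathlib

open MeasureTheory

/-- The open unit disk in the complex plane. -/
noncomputable def unitDisk : Set ℂ := Metric.ball (0 : ℂ) 1

/-- Lebesgue area measure on ℂ normalized so that the unit disk has measure 1,
i.e., (1/π) times two-dimensional Lebesgue measure. -/
noncomputable def dA : Measure ℂ := (ENNReal.ofReal Real.pi)⁻¹ • (volume : Measure ℂ)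

/-- φ is an analytic self-map of the unit disk. -/
def IsAnalyticSelfMap (φ : ℂ → ℂ) : Prop :=
  DifferentiableOn ℂ φ unitDisk ∧ Set.MapsTo φ unitDisk unitDisk

/-- The Besov integrand ‖f'(z)‖^p (1-|z|²)^{p-2}. -/
noncomputable def besovIntegrand (p : ℝ) (f : ℂ → ℂ) (z : ℂ) : ℝ :=
  ‖deriv f z‖ ^ p * (1 - ‖z‖ ^ 2) ^ (p - 2)

/-- Membership in the analytic Besov space B_p: f is analytic on 𝔻 and the
Besov integral is finite (expressed as integrability of the nonnegative integrand). -/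
def MemBesov (p : ℝ) (f : ℂ → ℂ) : Prop :=
  DifferentiableOn ℂ f unitDisk ∧ IntegrableOn (besovIntegrand p f) unitDisk dA

/-- The Besov semi-norm ‖f‖_p = (∫_𝔻 |f'|^p (1-|z|²)^{p-2} dA)^{1/p}. -/
noncomputable def besovSemi (p : ℝ) (f : ℂ → ℂ) : ℝ :=
  (∫ z in unitDisk, besovIntegrand p f z ∂dA) ^ (1 / p)

/-- The Besov norm ‖f‖_{B_p} = |f(0)| + ‖f‖_p. -/
noncomputable def besovNorm (p : ℝ) (f : ℂ → ℂ) : ℝ := ‖f 0‖ + besovSemi p f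

/-- The composition operator C_φ is an isometry on B_p. -/
def IsBesovIsometry (p : ℝ) (φ : ℂ → ℂ) : Prop :=
  ∀ f : ℂ → ℂ, MemBesov p f → MemBesov p (f ∘ φ) ∧ besovNorm p (f ∘ φ) = besovNorm p f

/-- φ is a rotation of the disk: φ(z) = λ z for a unimodular constant λ. -/
def IsRotation (φ : ℂ → ℂ) : Prop :=
  ∃ lam : ℂ, ‖lam‖ = 1 ∧ ∀ z ∈ unitDisk, φ z = lam * z

/-!
Testing the isometry on `f` and on `f + c` shows that `C_φ` preserves the Besov integral
`∫_𝔻 |f'|^p w dA` with `w = (1 - |z|²)^(p-2)`, which is integrable since `p > 1`.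
For `f' = exp (c z / p)` one has `|f'|^p = exp (Re (c z))`, so the push-forward under `φ` of the
finite measure `|φ'|^p w dA` on `𝔻` and the measure `w dA` have the same exponential moments.
Both live on the closed disk, where the functions `exp (Re (c z))` span a point-separating
algebra, so the two measures coincide. The first one is carried by `φ(𝔻)` and `w > 0` on `𝔻`,
hence `𝔻 \ φ(𝔻)` is Lebesgue-null.
-/

open Metric Set
open scoped BoundedContinuousFunction

lemma isOpen_unitDisk : IsOpen unitDisk := isOpen_ball

noncomputable def besovWeight (p : ℝ) (z : ℂ) : ℝ := (1 - ‖z‖ ^ 2) ^ (p - 2)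

lemma one_sub_norm_sq_pos {z : ℂ} (hz : z ∈ unitDisk) : 0 < 1 - ‖z‖ ^ 2 := by
  have : ‖z‖ < 1 := mem_ball_zero_iff.1 hz
  nlinarith [norm_nonneg z]

lemma besovWeight_pos (p : ℝ) {z : ℂ} (hz : z ∈ unitDisk) : 0 < besovWeight p z :=
  Real.rpow_pos_of_pos (one_sub_norm_sq_pos hz) _

lemma continuousOn_besovWeight (p : ℝ) : ContinuousOn (besovWeight p) unitDisk :=
  (continuous_const.sub (continuous_norm.pow 2)).continuousOn.rpow_const
    fun _ hz => Or.inl (one_sub_norm_sq_pos hz).ne'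

lemma integrableOn_mul_one_sub_sq_rpow {s : ℝ} (hs : -1 < s) :
    IntegrableOn (fun r : ℝ => r * (1 - r ^ 2) ^ s) (Ioo 0 1) := by
  have hs' : 0 < s + 1 := by linarith
  refine (intervalIntegral.integrableOn_deriv_of_nonneg
    (g := fun r => -(1 - r ^ 2) ^ (s + 1) / (2 * (s + 1))) ?_ ?_ ?_).mono_set Ioo_subset_Ioc_self
  · exact ((continuous_const.sub (continuous_pow 2)).continuousOn.rpow_const
      fun _ _ => Or.inr hs'.le).neg.div_const _
  · intro r hr
    have h0 : 0 < 1 - r ^ 2 := by nlinarith [hr.1, hr.2]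
    refine ((((hasDerivAt_pow 2 r).const_sub 1).rpow_const (p := s + 1)
      (Or.inl h0.ne')).neg.div_const (2 * (s + 1))).congr_deriv ?_
    rw [add_sub_cancel_right]
    field_simp
    ring
  · intro r hr
    have h0 : 0 < 1 - r ^ 2 := by nlinarith [hr.1, hr.2]
    exact mul_nonneg hr.1.le (Real.rpow_nonneg h0.le _)

lemma integrableOn_besovWeight_volume {p : ℝ} (hp : 1 < p) :
    IntegrableOn (besovWeight p) unitDisk volume := by
  refine (integrableOn_fun_norm_addHaar volume (f := fun r : ℝ => (1 - r ^ 2) ^ (p - 2))).2 ?_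
  simpa only [Complex.finrank_real_complex, Nat.add_one_sub_one, pow_one, smul_eq_mul] using
    integrableOn_mul_one_sub_sq_rpow (s := p - 2) (by linarith)

lemma integrableOn_dA_of_volume {f : ℂ → ℝ} {s : Set ℂ} (hf : IntegrableOn f s volume) :
    IntegrableOn f s dA := by
  rw [IntegrableOn, dA, Measure.restrict_smul]
  exact hf.smul_measure (ENNReal.inv_ne_top.2 (ENNReal.ofReal_pos.2 Real.pi_pos).ne')

lemma integrableOn_besovWeight {p : ℝ} (hp : 1 < p) : IntegrableOn (besovWeight p) unitDisk dA :=
  integrableOn_dA_of_volume (integrableOn_besovWeight_volume hp)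

lemma besovIntegrand_nonneg (p : ℝ) (f : ℂ → ℂ) {z : ℂ} (hz : z ∈ unitDisk) :
    0 ≤ besovIntegrand p f z :=
  mul_nonneg (Real.rpow_nonneg (norm_nonneg _) _) (besovWeight_pos p hz).le

lemma besovIntegrand_add_const (p : ℝ) (f : ℂ → ℂ) (c : ℂ) :
    besovIntegrand p (fun z => f z + c) = besovIntegrand p f := by
  ext z
  simp only [besovIntegrand, deriv_add_const]

lemma besovSemi_add_const (p : ℝ) (f : ℂ → ℂ) (c : ℂ) :
    besovSemi p (fun z => f z + c) = besovSemi p f := by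
  rw [besovSemi, besovIntegrand_add_const, besovSemi]

lemma MemBesov.add_const {p : ℝ} {f : ℂ → ℂ} (hf : MemBesov p f) (c : ℂ) :
    MemBesov p (fun z => f z + c) :=
  ⟨hf.1.add_const c, by rw [besovIntegrand_add_const]; exact hf.2⟩

lemma besovIntegrand_comp {p : ℝ} {f φ : ℂ → ℂ} {z : ℂ} (hf : DifferentiableAt ℂ f (φ z))
    (hφ : DifferentiableAt ℂ φ z) :
    besovIntegrand p (f ∘ φ) z = ‖deriv f (φ z)‖ ^ p * besovIntegrand p φ z := by
  rw [besovIntegrand, besovIntegrand, deriv_comp z hf hφ, norm_mul,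
    Real.mul_rpow (norm_nonneg _) (norm_nonneg _), mul_assoc]

lemma integral_besovIntegrand_eq_of_besovSemi_eq {p : ℝ} (hp : 0 < p) {f g : ℂ → ℂ}
    (h : besovSemi p f = besovSemi p g) :
    ∫ z in unitDisk, besovIntegrand p f z ∂dA = ∫ z in unitDisk, besovIntegrand p g z ∂dA := by
  have hnonneg : ∀ f, 0 ≤ ∫ z in unitDisk, besovIntegrand p f z ∂dA := fun f =>
    setIntegral_nonneg isOpen_unitDisk.measurableSet fun z hz => besovIntegrand_nonneg p f hz
  rw [besovSemi, besovSemi, one_div] at h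
  rwa [Real.rpow_left_inj (hnonneg f) (hnonneg g) (inv_ne_zero hp.ne')] at h

lemma IsBesovIsometry.besovSemi_comp {p : ℝ} {φ : ℂ → ℂ} (hiso : IsBesovIsometry p φ)
    {f : ℂ → ℂ} (hf : MemBesov p f) : besovSemi p (f ∘ φ) = besovSemi p f := by
  have key : ∀ c, ‖f (φ 0) + c‖ + besovSemi p (f ∘ φ) = ‖f 0 + c‖ + besovSemi p f := fun c => by
    have := (hiso _ (hf.add_const c)).2
    rwa [besovNorm, besovNorm, Function.comp_def, besovSemi_add_const, besovSemi_add_const,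
      ← Function.comp_def] at this
  have h₁ := key (-f 0)
  have h₂ := key (-f (φ 0))
  rw [← sub_eq_add_neg, ← sub_eq_add_neg, sub_self, norm_zero] at h₁ h₂
  rw [norm_sub_rev] at h₂
  linarith

lemma IsBesovIsometry.integral_besovIntegrand_comp {p : ℝ} (hp : 0 < p) {φ : ℂ → ℂ}
    (hiso : IsBesovIsometry p φ) {f : ℂ → ℂ} (hf : MemBesov p f) :
    ∫ z in unitDisk, besovIntegrand p (f ∘ φ) z ∂dA = ∫ z in unitDisk, besovIntegrand p f z ∂dA :=
  integral_besovIntegrand_eq_of_besovSemi_eq hp (hiso.besovSemi_comp hf)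

noncomputable def expRe (c z : ℂ) : ℝ := Real.exp (c * z).re

lemma continuous_expRe (c : ℂ) : Continuous (expRe c) := by
  unfold expRe; fun_prop

lemma expRe_pos (c z : ℂ) : 0 < expRe c z := Real.exp_pos _

lemma expRe_add (c d z : ℂ) : expRe (c + d) z = expRe c z * expRe d z := by
  simp only [expRe, add_mul, Complex.add_re, Real.exp_add]

lemma expRe_zero (z : ℂ) : expRe 0 z = 1 := by simp [expRe]

lemma exists_hasDerivAt_cexp_mul (a : ℂ) :
    ∃ F : ℂ → ℂ, ∀ z, HasDerivAt F (Complex.exp (a * z)) z := by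
  rcases eq_or_ne a 0 with rfl | ha
  · exact ⟨id, fun z => by simpa using hasDerivAt_id z⟩
  · refine ⟨fun z => a⁻¹ * Complex.exp (a * z), fun z => ?_⟩
    have := ((Complex.hasDerivAt_exp (a * z)).comp z ((hasDerivAt_id z).const_mul a)).const_mul a⁻¹
    refine this.congr_deriv ?_
    field_simp

lemma norm_cexp_div_mul_rpow {p : ℝ} (hp : p ≠ 0) (c z : ℂ) :
    ‖Complex.exp (c / p * z)‖ ^ p = expRe c z := by
  rw [Complex.norm_exp, ← Real.exp_mul, div_mul_eq_mul_div, Complex.div_ofReal_re,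
    div_mul_cancel₀ _ hp, expRe]

lemma exists_differentiable_norm_deriv_rpow_eq {p : ℝ} (hp : p ≠ 0) (c : ℂ) :
    ∃ f : ℂ → ℂ, Differentiable ℂ f ∧ ∀ z, ‖deriv f z‖ ^ p = expRe c z := by
  obtain ⟨f, hf⟩ := exists_hasDerivAt_cexp_mul (c / p)
  exact ⟨f, fun z => (hf z).differentiableAt,
    fun z => by rw [(hf z).deriv, norm_cexp_div_mul_rpow hp]⟩

lemma expRe_le_exp_norm (c : ℂ) {z : ℂ} (hz : ‖z‖ ≤ 1) : expRe c z ≤ Real.exp ‖c‖ := by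
  refine Real.exp_le_exp.2 ((Complex.re_le_norm _).trans ?_)
  rw [norm_mul]
  exact mul_le_of_le_one_right (norm_nonneg c) hz

lemma integrableOn_besovWeight_mul_expRe {p : ℝ} (hp : 1 < p) (c : ℂ) :
    IntegrableOn (fun z => besovWeight p z * expRe c z) unitDisk dA := by
  refine ((integrableOn_besovWeight hp).const_mul (Real.exp ‖c‖)).mono'
    (((continuousOn_besovWeight p).mul (continuous_expRe c).continuousOn).aestronglyMeasurable
      isOpen_unitDisk.measurableSet) ?_
  refine (ae_restrict_iff' isOpen_unitDisk.measurableSet).2 (ae_of_all _ fun z hz => ?_)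
  have hw := besovWeight_pos p hz
  rw [Real.norm_of_nonneg (mul_nonneg hw.le (expRe_pos c z).le), mul_comm]
  exact mul_le_mul_of_nonneg_right (expRe_le_exp_norm c (mem_ball_zero_iff.1 hz).le) hw.le

lemma IsBesovIsometry.integral_mul_expRe_comp {p : ℝ} (hp : 1 < p) {φ : ℂ → ℂ}
    (hφ : IsAnalyticSelfMap φ) (hiso : IsBesovIsometry p φ) (c : ℂ) :
    ∫ z in unitDisk, besovIntegrand p φ z * expRe c (φ z) ∂dA =
      ∫ z in unitDisk, besovWeight p z * expRe c z ∂dA := by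
  obtain ⟨f, hfd, hf⟩ := exists_differentiable_norm_deriv_rpow_eq (by linarith : p ≠ 0) c
  have hfint : besovIntegrand p f = fun z => besovWeight p z * expRe c z := by
    ext z; rw [besovIntegrand, hf, mul_comm]; rfl
  have hmem : MemBesov p f :=
    ⟨hfd.differentiableOn, by rw [hfint]; exact integrableOn_besovWeight_mul_expRe hp c⟩
  have hcomp : EqOn (besovIntegrand p (f ∘ φ)) (fun z => besovIntegrand p φ z * expRe c (φ z))
      unitDisk := fun z hz => by
    rw [besovIntegrand_comp (hfd _) (hφ.1.differentiableAt (isOpen_unitDisk.mem_nhds hz)), hf,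
      mul_comm]
  rw [← setIntegral_congr_fun isOpen_unitDisk.measurableSet hcomp, ← hfint]
  exact hiso.integral_besovIntegrand_comp (by linarith) hmem

lemma expRe_star_sub_ne {x y : ℂ} (h : x ≠ y) :
    expRe (star (x - y)) x ≠ expRe (star (x - y)) y := by
  intro heq
  have hre : (star (x - y) * (x - y)).re = 0 := by
    rw [mul_sub, Complex.sub_re, sub_eq_zero]
    exact Real.exp_injective heq
  rw [Complex.star_def, ← Complex.normSq_eq_conj_mul_self, Complex.ofReal_re,
    Complex.normSq_eq_zero, sub_eq_zero] at hre
  exact h hre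

section ExpReSubalgebra

open BoundedContinuousFunction

variable (K : Set ℂ) [CompactSpace K]

noncomputable def expReBCF (c : ℂ) : K →ᵇ ℝ :=
  mkOfCompact ⟨fun z => expRe c z, (continuous_expRe c).comp continuous_subtype_val⟩

lemma expReBCF_mul (c d : ℂ) : expReBCF K c * expReBCF K d = expReBCF K (c + d) := by
  ext z
  simp [expReBCF, expRe_add]

/-- Since `expRe` is multiplicative in `c`, the linear span of the `expRe c` is already a
(star) subalgebra. -/
noncomputable def expReSubalgebra : StarSubalgebra ℝ (K →ᵇ ℝ) where
  carrier := Submodule.span ℝ (range (expReBCF K))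
  mul_mem' {f g} hf hg := by
    have := Submodule.mul_mem_mul hf hg
    rw [Submodule.span_mul_span] at this
    refine Submodule.span_mono ?_ this
    rintro _ ⟨_, ⟨c, rfl⟩, _, ⟨d, rfl⟩, rfl⟩
    exact ⟨c + d, (expReBCF_mul K c d).symm⟩
  add_mem' := Submodule.add_mem _
  algebraMap_mem' r := by
    rw [Algebra.algebraMap_eq_smul_one]
    refine Submodule.smul_mem _ r (Submodule.subset_span ⟨0, ?_⟩)
    ext z
    simp [expReBCF, expRe_zero]
  star_mem' {f} hf := by
    have : star f = f := by ext z; exact star_trivial _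
    rwa [this]

lemma expReSubalgebra_separatesPoints :
    ((expReSubalgebra K).map (toContinuousMapStarₐ ℝ)).SeparatesPoints := fun _ _ hxy =>
  ⟨_, ⟨_, ⟨expReBCF K _, Submodule.subset_span ⟨_, rfl⟩, rfl⟩, rfl⟩,
    expRe_star_sub_ne (Subtype.val_injective.ne hxy)⟩

end ExpReSubalgebra

lemma BoundedContinuousFunction.integral_eq_of_mem_span {X : Type*} [TopologicalSpace X]
    [MeasurableSpace X] [OpensMeasurableSpace X] {μ ν : Measure X} [IsFiniteMeasure μ]
    [IsFiniteMeasure ν] {s : Set (X →ᵇ ℝ)} (h : ∀ g ∈ s, ∫ x, g x ∂μ = ∫ x, g x ∂ν)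
    {g : X →ᵇ ℝ} (hg : g ∈ Submodule.span ℝ s) : ∫ x, g x ∂μ = ∫ x, g x ∂ν := by
  induction hg using Submodule.span_induction with
  | mem g hg => exact h g hg
  | zero => simp
  | add f g _ _ hf hg =>
    simp only [BoundedContinuousFunction.coe_add, Pi.add_apply]
    rw [integral_add (f.integrable _) (g.integrable _),
      integral_add (f.integrable _) (g.integrable _), hf, hg]
  | smul r g _ hg => rw [BoundedContinuousFunction.coe_smul, integral_smul, integral_smul, hg]

theorem MeasureTheory.Measure.ext_of_integral_expRe_eq {K : Set ℂ} (hK : IsCompact K)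
    {μ ν : Measure ℂ} [IsFiniteMeasure μ] [IsFiniteMeasure ν] (hμ : ∀ᵐ z ∂μ, z ∈ K)
    (hν : ∀ᵐ z ∂ν, z ∈ K) (h : ∀ c, ∫ z, expRe c z ∂μ = ∫ z, expRe c z ∂ν) : μ = ν := by
  have : CompactSpace K := isCompact_iff_compactSpace.1 hK
  have hμK : μ.restrict K = μ := Measure.restrict_eq_self_of_ae_mem hμ
  have hνK : ν.restrict K = ν := Measure.restrict_eq_self_of_ae_mem hν
  have hK_eq : μ.comap ((↑) : K → ℂ) = ν.comap (↑) := by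
    refine ext_of_forall_mem_subalgebra_integral_eq_of_pseudoEMetric_complete_countable
      (expReSubalgebra_separatesPoints K) fun g hg => ?_
    refine BoundedContinuousFunction.integral_eq_of_mem_span ?_ hg
    rintro _ ⟨c, rfl⟩
    simpa [integral_subtype_comap hK.measurableSet, expReBCF, hμK, hνK] using h c
  rw [← hμK, ← hνK, ← map_comap_subtype_coe hK.measurableSet,
    ← map_comap_subtype_coe hK.measurableSet, hK_eq]

lemma integral_withDensity_ofReal {X : Type*} [MeasurableSpace X] {μ : Measure X} {g : X → ℝ}
    (hg : AEMeasurable g μ) (hg0 : 0 ≤ᵐ[μ] g) (h : X → ℝ) :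
    ∫ x, h x ∂μ.withDensity (fun x => ENNReal.ofReal (g x)) = ∫ x, g x * h x ∂μ := by
  rw [integral_withDensity_eq_integral_toReal_smul₀ hg.ennreal_ofReal
    (ae_of_all _ fun _ => ENNReal.ofReal_lt_top)]
  refine integral_congr_ae (hg0.mono fun x hx => ?_)
  simp only [ENNReal.toReal_ofReal hx, smul_eq_mul]

lemma IsOpen.measurableSet_image_of_continuousOn {X Y : Type*} [TopologicalSpace X]
    [LocallyCompactSpace X] [SecondCountableTopology X] [TopologicalSpace Y] [T2Space Y]
    [MeasurableSpace Y] [OpensMeasurableSpace Y] {U : Set X} (hU : IsOpen U) {f : X → Y}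
    (hf : ContinuousOn f U) : MeasurableSet (f '' U) := by
  have := hU.locallyCompactSpace
  obtain ⟨K, hK, hKU⟩ :=
    (isSigmaCompact_iff_sigmaCompactSpace.2 inferInstance).image_of_continuousOn hf
  rw [← hKU]
  exact MeasurableSet.iUnion fun n => (hK n).measurableSet

noncomputable def diskMeasure (w : ℂ → ℝ) : Measure ℂ :=
  (dA.restrict unitDisk).withDensity fun z => ENNReal.ofReal (w z)

lemma ae_diskMeasure_mem (w : ℂ → ℝ) : ∀ᵐ z ∂diskMeasure w, z ∈ unitDisk :=
  (withDensity_absolutelyContinuous _ _).ae_le (ae_restrict_mem isOpen_unitDisk.measurableSet)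

lemma integral_diskMeasure {w : ℂ → ℝ} (hw : ContinuousOn w unitDisk)
    (hw0 : ∀ z ∈ unitDisk, 0 ≤ w z) (h : ℂ → ℝ) :
    ∫ z, h z ∂diskMeasure w = ∫ z in unitDisk, w z * h z ∂dA :=
  integral_withDensity_ofReal (hw.aemeasurable isOpen_unitDisk.measurableSet)
    ((ae_restrict_iff' isOpen_unitDisk.measurableSet).2 (ae_of_all _ hw0)) h

lemma isFiniteMeasure_diskMeasure {w : ℂ → ℝ} (hw : IntegrableOn w unitDisk dA) :
    IsFiniteMeasure (diskMeasure w) :=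
  isFiniteMeasure_withDensity_ofReal hw.2

lemma ContinuousOn.aemeasurable_diskMeasure {f : ℂ → ℂ} (hf : ContinuousOn f unitDisk)
    (w : ℂ → ℝ) : AEMeasurable f (diskMeasure w) :=
  (hf.aemeasurable isOpen_unitDisk.measurableSet).mono_ac (withDensity_absolutelyContinuous _ _)

lemma volume_eq_zero_of_diskMeasure_eq_zero {w : ℂ → ℝ} (hw : ContinuousOn w unitDisk)
    (hw0 : ∀ z ∈ unitDisk, 0 < w z) {s : Set ℂ} (hs : s ⊆ unitDisk) (h : diskMeasure w s = 0) :
    volume s = 0 := by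
  rw [diskMeasure, withDensity_apply_eq_zero'
    (hw.aemeasurable isOpen_unitDisk.measurableSet).ennreal_ofReal] at h
  have hsw : {z | ENNReal.ofReal (w z) ≠ 0} ∩ s = s :=
    inter_eq_right.2 fun z hz => (ENNReal.ofReal_pos.2 (hw0 z (hs hz))).ne'
  rw [hsw, Measure.restrict_apply' isOpen_unitDisk.measurableSet, inter_eq_left.2 hs, dA,
    Measure.smul_apply, smul_eq_mul, mul_eq_zero] at h
  exact h.resolve_left (ENNReal.inv_ne_zero.2 ENNReal.ofReal_ne_top)

lemma continuousOn_besovIntegrand {p : ℝ} (hp : 0 ≤ p) {f : ℂ → ℂ}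
    (hf : DifferentiableOn ℂ f unitDisk) : ContinuousOn (besovIntegrand p f) unitDisk :=
  ((hf.analyticOnNhd isOpen_unitDisk).deriv.continuousOn.norm.rpow_const
    fun _ _ => Or.inr hp).mul (continuousOn_besovWeight p)

lemma besovIntegrand_id (p : ℝ) : besovIntegrand p id = besovWeight p := by
  ext z
  rw [besovIntegrand, deriv_id, norm_one, Real.one_rpow, one_mul, besovWeight]

lemma memBesov_id {p : ℝ} (hp : 1 < p) : MemBesov p id :=
  ⟨differentiableOn_id, by rw [besovIntegrand_id]; exact integrableOn_besovWeight hp⟩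

theorem IsBesovIsometry.map_diskMeasure {p : ℝ} (hp : 1 < p) {φ : ℂ → ℂ}
    (hφ : IsAnalyticSelfMap φ) (hiso : IsBesovIsometry p φ) :
    (diskMeasure (besovIntegrand p φ)).map φ = diskMeasure (besovWeight p) := by
  have : IsFiniteMeasure (diskMeasure (besovIntegrand p φ)) :=
    isFiniteMeasure_diskMeasure (hiso id (memBesov_id hp)).1.2
  have := isFiniteMeasure_diskMeasure (integrableOn_besovWeight hp)
  have hφm := hφ.1.continuousOn.aemeasurable_diskMeasure (besovIntegrand p φ)
  have hJ := continuousOn_besovIntegrand (by linarith) hφ.1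
  refine Measure.ext_of_integral_expRe_eq (isCompact_closedBall 0 1) ?_ ?_ fun c => ?_
  · refine (ae_map_iff hφm measurableSet_closedBall).2 ?_
    exact (ae_diskMeasure_mem _).mono fun z hz => ball_subset_closedBall (hφ.2 hz)
  · exact (ae_diskMeasure_mem _).mono fun z hz => ball_subset_closedBall hz
  · rw [integral_map hφm (continuous_expRe c).aestronglyMeasurable,
      integral_diskMeasure hJ fun z hz => besovIntegrand_nonneg p φ hz,
      integral_diskMeasure (continuousOn_besovWeight p) fun z hz => (besovWeight_pos p hz).le]
    exact hiso.integral_mul_expRe_comp hp hφ c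

theorem isometry_full_map_general
    (p : ℝ) (hp1 : 1 < p) (φ : ℂ → ℂ)
    (hφ : IsAnalyticSelfMap φ) (hiso : IsBesovIsometry p φ) :
    volume (unitDisk \ (φ '' unitDisk)) = 0 := by
  have hE : MeasurableSet (unitDisk \ φ '' unitDisk) := isOpen_unitDisk.measurableSet.diff
    (isOpen_unitDisk.measurableSet_image_of_continuousOn hφ.1.continuousOn)
  have hnull : diskMeasure (besovWeight p) (unitDisk \ φ '' unitDisk) = 0 := by
    rw [← hiso.map_diskMeasure hp1 hφ, Measure.map_apply_of_aemeasurable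
      (hφ.1.continuousOn.aemeasurable_diskMeasure _) hE]
    exact measure_eq_zero_iff_ae_notMem.2
      ((ae_diskMeasure_mem _).mono fun z hz hzE => hzE.2 ⟨z, hz, rfl⟩)
  exact volume_eq_zero_of_diskMeasure_eq_zero (continuousOn_besovWeight p)
    (fun z hz => besovWeight_pos p hz) sdiff_subset hnull

/-- If C_φ is an isometry on B_p (1<p<∞, p≠2), then φ is a full
map of the disk: A[𝔻 \ φ(𝔻)] = 0. -/
theorem isometry_full_map
    (p : ℝ) (hp1 : 1 < p) (hp2 : p ≠ 2) (φ : ℂ → ℂ)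
    (hφ : IsAnalyticSelfMap φ) (hiso : IsBesovIsometry p φ) :
    volume (unitDisk \ (φ '' unitDisk)) = 0 :=
  isometry_full_map_general p hp1 φ hφ hiso
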